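/- arXiv:2103.12586 — 3 statements merged into one kernel-verified Lean document; each statement's English description precedes it below -/
import Mathlib

section
/- For every z in the complex strip -1 < Re(z) < 0 and every τ > 0, the integral of u^z e^{-τu} e^{-iux} over u ∈ (0,∞) equals Γ(z+1)/(i(x - iτ))^{z+1}, where the complex power uses the branch with -π < arg(x - iτ) < 0. -/
/-!
Both sides are holomorphic in the rate `s` on the half-plane `0 < re s`: the integral
`∫₀^∞ u^z e^{-su} du` by differentiation under the integral sign, and `Γ(z+1) / s^(z+1)` because
the principal power is holomorphic off the negative real axis. For real `s > 0` the substitution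
`t = s u` turns the integral into Euler's integral for `Γ(z+1)`, so the identity theorem gives
equality on the whole half-plane, in particular at `s = i(x - iτ) = τ + ix`.
-/

open MeasureTheory Complex Set Filter Topology Metric

lemma integrableOn_rpow_mul_exp_neg_mul {r c : ℝ} (hr : -1 < r) (hc : 0 < c) :
    IntegrableOn (fun u : ℝ => u ^ r * Real.exp (-c * u)) (Ioi 0) := by
  simpa using integrableOn_rpow_mul_exp_neg_mul_rpow hr one_pos hc

namespace Complex

lemma continuousOn_cpow_mul_exp_neg_mul (z s : ℂ) :
    ContinuousOn (fun u : ℝ => (u : ℂ) ^ z * cexp (-s * u)) (Ioi 0) := by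
  intro u hu
  have : ContinuousAt (fun u : ℝ => (u : ℂ) ^ z) u :=
    (continuousAt_cpow_const (ofReal_mem_slitPlane.2 hu)).comp continuous_ofReal.continuousAt
  exact (this.mul (by fun_prop)).continuousWithinAt

lemma norm_cpow_mul_exp_neg_mul_le {u : ℝ} (hu : 0 < u) (z : ℂ) {s : ℂ} {c : ℝ}
    (hc : c ≤ s.re) : ‖(u : ℂ) ^ z * cexp (-s * u)‖ ≤ u ^ z.re * Real.exp (-c * u) := by
  rw [norm_mul, norm_cpow_eq_rpow_re_of_pos hu, norm_exp]
  gcongr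
  simpa using mul_le_mul_of_nonneg_right hc hu.le

variable {z : ℂ}

lemma integrableOn_cpow_mul_exp_neg_mul (hz : -1 < z.re) {s : ℂ} (hs : 0 < s.re) :
    IntegrableOn (fun u : ℝ => (u : ℂ) ^ z * cexp (-s * u)) (Ioi 0) := by
  refine (integrableOn_rpow_mul_exp_neg_mul hz hs).mono'
    ((continuousOn_cpow_mul_exp_neg_mul z s).aestronglyMeasurable measurableSet_Ioi) ?_
  filter_upwards [self_mem_ae_restrict measurableSet_Ioi] with u hu
  exact norm_cpow_mul_exp_neg_mul_le hu z le_rfl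

lemma hasDerivAt_cpow_mul_exp_neg_mul {u : ℝ} (hu : 0 < u) (z s : ℂ) :
    HasDerivAt (fun s : ℂ => (u : ℂ) ^ z * cexp (-s * u))
      (-((u : ℂ) ^ (z + 1) * cexp (-s * u))) s := by
  have h := (((hasDerivAt_id s).neg.mul_const (u : ℂ)).cexp).const_mul ((u : ℂ) ^ z)
  simp only [Pi.neg_apply, id, neg_one_mul] at h
  refine h.congr_deriv ?_
  rw [cpow_add _ _ (ofReal_ne_zero.2 hu.ne'), cpow_one]
  ring

lemma differentiableOn_integral_cpow_mul_exp_neg_mul (hz : -1 < z.re) :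
    DifferentiableOn ℂ (fun s : ℂ => ∫ u in Ioi (0 : ℝ), (u : ℂ) ^ z * cexp (-s * u))
      {s | 0 < s.re} := by
  intro s₀ hs₀
  have hε : 0 < s₀.re / 2 := half_pos hs₀
  have h_re : ∀ s ∈ ball s₀ (s₀.re / 2), s₀.re / 2 ≤ s.re := fun s hs => by
    have := (abs_le.1 ((abs_re_le_norm (s - s₀)).trans (mem_ball_iff_norm.1 hs).le)).1
    simp only [sub_re] at this
    linarith
  refine (hasDerivAt_integral_of_dominated_loc_of_deriv_le (ball_mem_nhds s₀ hε)
    (F := fun s (u : ℝ) => (u : ℂ) ^ z * cexp (-s * u))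
    (F' := fun s (u : ℝ) => -((u : ℂ) ^ (z + 1) * cexp (-s * u)))
    (bound := fun u : ℝ => u ^ (z + 1).re * Real.exp (-(s₀.re / 2) * u))
    (Eventually.of_forall fun s =>
      (continuousOn_cpow_mul_exp_neg_mul z s).aestronglyMeasurable measurableSet_Ioi)
    (integrableOn_cpow_mul_exp_neg_mul hz hs₀)
    ((continuousOn_cpow_mul_exp_neg_mul (z + 1) s₀).neg.aestronglyMeasurable measurableSet_Ioi)
    ?_ (integrableOn_rpow_mul_exp_neg_mul (by simp; linarith) hε) ?_).2.differentiableAt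
    |>.differentiableWithinAt
  · filter_upwards [self_mem_ae_restrict measurableSet_Ioi] with u hu s hs
    rw [norm_neg]
    exact norm_cpow_mul_exp_neg_mul_le hu (z + 1) (h_re s hs)
  · filter_upwards [self_mem_ae_restrict measurableSet_Ioi] with u hu s _
    exact hasDerivAt_cpow_mul_exp_neg_mul hu z s

lemma integral_cpow_mul_exp_neg_mul_ofReal {r : ℝ} (hr : 0 < r) (hz : -1 < z.re) :
    ∫ u in Ioi (0 : ℝ), (u : ℂ) ^ z * cexp (-r * u) = Gamma (z + 1) / (r : ℂ) ^ (z + 1) := by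
  have h := integral_cpow_mul_exp_neg_mul_Ioi (a := z + 1) (by simp; linarith) hr
  simp only [add_sub_cancel_right, ← neg_mul] at h
  rw [h, one_div, inv_cpow _ _ (by simp [arg_ofReal_of_nonneg hr.le, Real.pi_ne_zero.symm]),
    div_eq_inv_mul]

lemma frequently_ofReal_pos_nhdsNE_one {p : ℂ → Prop} (h : ∀ r : ℝ, 0 < r → p r) :
    ∃ᶠ w in 𝓝[≠] (1 : ℂ), p w := by
  have h_tendsto : Tendsto ofReal (𝓝[≠] 1) (𝓝[≠] 1) :=
    continuous_ofReal.continuousWithinAt.tendsto_nhdsWithin fun r hr => by simpa using hr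
  refine h_tendsto.frequently (Eventually.frequently ?_)
  filter_upwards [nhdsWithin_le_nhds (lt_mem_nhds one_pos)] with r hr using h r hr

lemma integral_cpow_mul_exp_neg_mul (hz : -1 < z.re) {s : ℂ} (hs : 0 < s.re) :
    ∫ u in Ioi (0 : ℝ), (u : ℂ) ^ z * cexp (-s * u) = Gamma (z + 1) / s ^ (z + 1) := by
  have h_open : IsOpen {w : ℂ | 0 < w.re} := isOpen_lt continuous_const continuous_re
  have h_rhs : DifferentiableOn ℂ (fun w : ℂ => Gamma (z + 1) / w ^ (z + 1)) {w | 0 < w.re} :=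
    fun w hw => ((differentiableAt_const _).div
      ((hasDerivAt_id w).cpow_const (Or.inl hw)).differentiableAt
      (cpow_ne_zero_iff.2 (Or.inl (ne_zero_of_re_pos hw)))).differentiableWithinAt
  refine ((differentiableOn_integral_cpow_mul_exp_neg_mul hz).analyticOnNhd h_open
    |>.eqOn_of_preconnected_of_frequently_eq (h_rhs.analyticOnNhd h_open)
      (convex_halfSpace_re_gt 0).isPreconnected (by simp)
      (frequently_ofReal_pos_nhdsNE_one fun r hr => integral_cpow_mul_exp_neg_mul_ofReal hr hz)) hs

end Complex

theorem integral_rpow_exp_eq_gamma_div_general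
    (z : ℂ) (hz1 : -1 < z.re) (τ : ℝ) (hτ : 0 < τ) (x : ℝ) :
    ∫ u in Set.Ioi (0 : ℝ),
        (u : ℂ) ^ z * Complex.exp (-(τ : ℂ) * u) * Complex.exp (-Complex.I * u * x)
      = Complex.Gamma (z + 1) / (Complex.I * ((x : ℂ) - Complex.I * τ)) ^ (z + 1) := by
  have hs : I * ((x : ℂ) - I * τ) = τ + x * I := by linear_combination (-(τ : ℂ)) * I_sq
  have h_integrand : ∀ u : ℝ, (u : ℂ) ^ z * cexp (-(τ : ℂ) * u) * cexp (-I * u * x)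
      = (u : ℂ) ^ z * cexp (-(τ + x * I) * u) := fun u => by
    rw [mul_assoc, ← Complex.exp_add]
    ring_nf
  simp_rw [h_integrand, hs]
  exact integral_cpow_mul_exp_neg_mul hz1 (by simpa using hτ)

/-- For `-1 < Re z < 0` and `τ > 0`, the integral
`∫_0^∞ u^z e^{-τu} e^{-iux} du = Γ(z+1) / (i(x - iτ))^{z+1}` (principal branch). -/
theorem integral_rpow_exp_eq_gamma_div
    (z : ℂ) (hz1 : -1 < z.re) (hz2 : z.re < 0) (τ : ℝ) (hτ : 0 < τ) (x : ℝ) :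
    ∫ u in Set.Ioi (0 : ℝ),
        (u : ℂ) ^ z * Complex.exp (-(τ : ℂ) * u) * Complex.exp (-Complex.I * u * x)
      = Complex.Gamma (z + 1) / (Complex.I * ((x : ℂ) - Complex.I * τ)) ^ (z + 1) :=
  integral_rpow_exp_eq_gamma_div_general z hz1 τ hτ x
end

section
/- Let K_η(ζ) = (2π)^{-n} e^{-nη} (1-ω)^{-n} exp(-((1+ω)/(1-ω)) |ζ|²/4) with ω = e^{-2η} and η = r + it, r > 0. Then |K_η(ζ)| ≤ 2 / |sin t|^n for all ζ ∈ ℂ^n, uniformly in r > 0 (for t not a multiple of π). -/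
open Complex

/-- The kernel of the special Hermite (twisted Laplacian) semigroup:
`K_η(ζ) = (2π)^{-n} e^{-nη} (1-ω)^{-n} exp(-((1+ω)/(1-ω)) |ζ|²/4)` with `ω = e^{-2η}`. -/
noncomputable def specialHermiteKernel (n : ℕ) (η : ℂ) (ζ : EuclideanSpace ℂ (Fin n)) : ℂ :=
  ((2 * Real.pi : ℝ) : ℂ) ^ (-(n : ℤ)) * Complex.exp (-(n : ℂ) * η) *
    (1 - Complex.exp (-2 * η)) ^ (-(n : ℤ)) *
    Complex.exp (-((1 + Complex.exp (-2 * η)) / (1 - Complex.exp (-2 * η))) *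
      ((‖ζ‖ ^ 2 : ℝ) / 4))

/-! With `ω = e^{-2η}` one has `1 - ω = 2 e^{-η} sinh η`, so the prefactor `e^{-nη} (1-ω)^{-n}` is
`(2 sinh η)^{-n}`, and `|sinh (r + it)| ≥ cosh r |sin t| ≥ |sin t|`. The Gaussian factor has
modulus at most `1` because `Re ((1+ω)/(1-ω)) = (1 - |ω|²)/|1-ω|² ≥ 0` for `|ω| = e^{-2r} ≤ 1`.
Hence `|K_η| ≤ (2π)^{-n} (2 |sin t|)^{-n} ≤ 2/|sin t|^n`. -/

namespace Complex

theorem abs_sin_im_le_norm_sinh (z : ℂ) : |Real.sin z.im| ≤ ‖sinh z‖ := by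
  have him : (sinh z).im = Real.cosh z.re * Real.sin z.im := by
    conv_lhs => rw [← re_add_im z]
    rw [sinh_add, sinh_mul_I, cosh_mul_I, ← ofReal_sinh, ← ofReal_cosh, ← ofReal_sin,
      ← ofReal_cos]
    simp [sin_ofReal_re]
  calc |Real.sin z.im| ≤ Real.cosh z.re * |Real.sin z.im| :=
        le_mul_of_one_le_left (abs_nonneg _) (Real.one_le_cosh _)
    _ = |(sinh z).im| := by rw [him, abs_mul, abs_of_pos (Real.cosh_pos _)]
    _ ≤ ‖sinh z‖ := abs_im_le_norm _

theorem one_sub_exp_neg_two_mul (η : ℂ) : 1 - exp (-2 * η) = 2 * exp (-η) * sinh η := by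
  rw [mul_assoc, mul_left_comm, two_sinh, mul_sub, ← exp_add, ← exp_add, neg_add_cancel, exp_zero,
    show -η + -η = -2 * η by ring]

theorem two_mul_abs_sin_im_mul_norm_exp_neg_le (η : ℂ) :
    2 * |Real.sin η.im| * ‖exp (-η)‖ ≤ ‖1 - exp (-2 * η)‖ := by
  rw [one_sub_exp_neg_two_mul, norm_mul, norm_mul, Complex.norm_two, mul_right_comm]
  gcongr
  exact abs_sin_im_le_norm_sinh η

theorem re_one_add_div_one_sub_nonneg {ω : ℂ} (hω : ‖ω‖ ≤ 1) :
    0 ≤ ((1 + ω) / (1 - ω)).re := by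
  have hsq : ω.re ^ 2 + ω.im ^ 2 ≤ 1 := by
    have h : ‖ω‖ ^ 2 ≤ 1 := pow_le_one₀ (norm_nonneg ω) hω
    rw [Complex.sq_norm, normSq_apply] at h
    nlinarith
  rw [div_re, ← add_div]
  apply div_nonneg _ (normSq_nonneg _)
  simp only [add_re, add_im, sub_re, sub_im, one_re, one_im]
  nlinarith

theorem norm_exp_neg_div_norm_one_sub_exp_le {η : ℂ} (hη : Real.sin η.im ≠ 0) :
    ‖exp (-η)‖ / ‖1 - exp (-2 * η)‖ ≤ (2 * |Real.sin η.im|)⁻¹ := by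
  have hbound := two_mul_abs_sin_im_mul_norm_exp_neg_le η
  have hsin : 0 < 2 * |Real.sin η.im| := by positivity
  have hpos : 0 < ‖1 - exp (-2 * η)‖ :=
    (mul_pos hsin (norm_pos_iff.2 (exp_ne_zero _))).trans_le hbound
  rw [div_le_iff₀ hpos, inv_mul_eq_div, le_div_iff₀ hsin]
  linarith

end Complex

theorem norm_specialHermiteKernel (n : ℕ) (η : ℂ) (ζ : EuclideanSpace ℂ (Fin n)) :
    ‖specialHermiteKernel n η ζ‖ =
      ((2 * Real.pi) ^ n)⁻¹ * (‖exp (-η)‖ / ‖1 - exp (-2 * η)‖) ^ n *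
        Real.exp (-((1 + exp (-2 * η)) / (1 - exp (-2 * η))).re * (‖ζ‖ ^ 2 / 4)) := by
  have hexp : exp (-(n : ℂ) * η) = exp (-η) ^ n := by
    rw [← exp_nat_mul]; ring_nf
  have hre (w : ℂ) : (-w * ((‖ζ‖ ^ 2 : ℝ) / 4 : ℂ)).re = -w.re * (‖ζ‖ ^ 2 / 4) := by
    rw [← ofReal_ofNat, ← ofReal_div, re_mul_ofReal, neg_re]
  rw [specialHermiteKernel, hexp, norm_mul, norm_mul, norm_mul, norm_zpow, norm_zpow, norm_pow,
    norm_exp (_ * _), hre, norm_real, Real.norm_of_nonneg (by positivity), zpow_neg, zpow_neg,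
    zpow_natCast, zpow_natCast, div_pow]
  ring

theorem norm_specialHermiteKernel_le (n : ℕ) {η : ℂ} (hη : 0 ≤ η.re)
    (ζ : EuclideanSpace ℂ (Fin n)) :
    ‖specialHermiteKernel n η ζ‖ ≤
      ((2 * Real.pi) ^ n)⁻¹ * (‖exp (-η)‖ / ‖1 - exp (-2 * η)‖) ^ n := by
  have hω : ‖exp (-2 * η)‖ ≤ 1 := by
    simpa [norm_exp] using hη
  have hre := re_one_add_div_one_sub_nonneg hω
  rw [norm_specialHermiteKernel]
  refine mul_le_of_le_one_right (by positivity) (Real.exp_le_one_iff.2 ?_)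
  rw [neg_mul, neg_nonpos]
  exact mul_nonneg hre (by positivity)

theorem specialHermiteKernel_bound_general (n : ℕ) (r t : ℝ) (hr : 0 < r)
    (ht : Real.sin t ≠ 0) (ζ : EuclideanSpace ℂ (Fin n)) :
    ‖specialHermiteKernel n (r + t * Complex.I) ζ‖ ≤ 2 / |Real.sin t| ^ n := by
  set η : ℂ := r + t * I
  have hre : η.re = r := by simp [η]
  have him : η.im = t := by simp [η]
  have hq := norm_exp_neg_div_norm_one_sub_exp_le (η := η) (by rwa [him])
  rw [him] at hq
  have h2π : ((2 * Real.pi) ^ n)⁻¹ ≤ 1 :=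
    inv_le_one_of_one_le₀ (one_le_pow₀ (by linarith [Real.pi_gt_three]))
  calc ‖specialHermiteKernel n η ζ‖
      ≤ ((2 * Real.pi) ^ n)⁻¹ * (‖exp (-η)‖ / ‖1 - exp (-2 * η)‖) ^ n :=
        norm_specialHermiteKernel_le n (hre ▸ hr.le) ζ
    _ ≤ 1 * (2 * |Real.sin t|)⁻¹ ^ n := by gcongr
    _ ≤ 2 / |Real.sin t| ^ n := by
        rw [one_mul, mul_inv, mul_pow, div_eq_mul_inv, ← inv_pow]
        gcongr
        exact (pow_le_one₀ (by norm_num) (by norm_num)).trans one_le_two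

/-- `|K_{r+it}(ζ)| ≤ 2/|sin t|^n` for all `ζ ∈ ℂⁿ`, uniformly in `r > 0`,
whenever `sin t ≠ 0`. -/
theorem specialHermiteKernel_bound (n : ℕ) (hn : 1 ≤ n) (r t : ℝ) (hr : 0 < r)
    (ht : Real.sin t ≠ 0) (ζ : EuclideanSpace ℂ (Fin n)) :
    ‖specialHermiteKernel n (r + t * Complex.I) ζ‖ ≤ 2 / |Real.sin t| ^ n :=
  specialHermiteKernel_bound_general n r t hr ht ζ
end

section
/- For -1 < Re(z) < 0 and any Schwartz function φ on ℝ, the limit as z → -1 (along the real axis) of (1/Γ(z+1)) ∫_0^∞ x^z φ(x) dx equals φ(0). -/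
open MeasureTheory Filter

open Set Topology NNReal

/-!
Subtracting `f 0` on `(0, 1]` gives `∫₀^∞ x^z f = f 0 / (z + 1) + R z`, where `R z` stays bounded as
`z → -1⁺` because `f` is Lipschitz on `[0, 1]` and integrable at infinity. After division by `Γ(z + 1)`
the first term is `f 0 / Γ(z + 2) → f 0`, and the second one is killed by `1 / Γ(z + 1) → 0`: the
function `1 / Γ` is entire and vanishes at the pole `0` of `Γ`.
-/

theorem Real.continuous_one_div_Gamma : Continuous fun x : ℝ => 1 / Real.Gamma x := by
  have h : (fun x : ℝ => 1 / Real.Gamma x) = fun x : ℝ => ((Complex.Gamma x)⁻¹).re := by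
    ext x
    rw [Complex.Gamma_ofReal, ← Complex.ofReal_inv, Complex.ofReal_re, one_div]
  rw [h]
  exact Complex.continuous_re.comp
    (Complex.differentiable_one_div_Gamma.continuous.comp Complex.continuous_ofReal)

theorem SchwartzMap.lipschitzWith {E F : Type*} [NormedAddCommGroup E] [NormedSpace ℝ E]
    [NormedAddCommGroup F] [NormedSpace ℝ F] (f : SchwartzMap E F) :
    LipschitzWith (SchwartzMap.seminorm ℝ 0 1 f).toNNReal f := by
  refine lipschitzWith_of_nnnorm_fderiv_le f.differentiable fun x => ?_
  rw [← NNReal.coe_le_coe, coe_nnnorm, Real.coe_toNNReal _ (apply_nonneg _ _),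
    ← norm_iteratedFDeriv_one (𝕜 := ℝ)]
  exact f.norm_iteratedFDeriv_le_seminorm ℝ 1 x

section RpowIntegral

variable {E : Type*} [NormedAddCommGroup E] [NormedSpace ℝ E] {f : ℝ → E} {K : ℝ≥0} {z : ℝ}

theorem LipschitzOnWith.norm_rpow_smul_sub_le (hf : LipschitzOnWith K f (Icc 0 1))
    (hz : -1 ≤ z) {x : ℝ} (hx : x ∈ Ioc 0 1) : ‖x ^ z • (f x - f 0)‖ ≤ K := by
  have hx0 : 0 < x := hx.1
  have hlip : ‖f x - f 0‖ ≤ K * x := by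
    simpa [dist_eq_norm, abs_of_pos hx0] using
      hf.dist_le_mul x (Ioc_subset_Icc_self hx) 0 (left_mem_Icc.2 zero_le_one)
  calc ‖x ^ z • (f x - f 0)‖ = x ^ z * ‖f x - f 0‖ := by
        rw [norm_smul, Real.norm_of_nonneg (Real.rpow_nonneg hx0.le z)]
    _ ≤ x ^ z * (K * x) := by gcongr
    _ = K * x ^ (z + 1) := by rw [Real.rpow_add_one hx0.ne']; ring
    _ ≤ K := mul_le_of_le_one_right K.2 (Real.rpow_le_one hx0.le hx.2 (by linarith))

theorem LipschitzOnWith.integrableOn_Ioc_rpow_smul_sub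
    (hf : LipschitzOnWith K f (Icc 0 1)) (hz : -1 ≤ z) :
    IntegrableOn (fun x => x ^ z • (f x - f 0)) (Ioc 0 1) := by
  refine Integrable.mono' (integrableOn_const measure_Ioc_lt_top.ne) ?_
    ((ae_restrict_mem measurableSet_Ioc).mono fun _ hx => hf.norm_rpow_smul_sub_le hz hx)
  exact (measurable_id.pow_const z).aestronglyMeasurable.smul
    (((hf.continuousOn.mono Ioc_subset_Icc_self).aestronglyMeasurable measurableSet_Ioc).sub
      aestronglyMeasurable_const)

theorem norm_rpow_smul_le_of_one_le (hz : z ≤ 0) {x : ℝ} (hx : 1 ≤ x) :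
    ‖x ^ z • f x‖ ≤ ‖f x‖ := by
  rw [norm_smul, Real.norm_of_nonneg (Real.rpow_nonneg (zero_le_one.trans hx) z)]
  exact mul_le_of_le_one_left (norm_nonneg _) (Real.rpow_le_one_of_one_le_of_nonpos hx hz)

theorem integrableOn_Ioi_one_rpow_smul (hfi : IntegrableOn f (Ioi 1)) (hz : z ≤ 0) :
    IntegrableOn (fun x => x ^ z • f x) (Ioi 1) :=
  Integrable.mono' hfi.norm
    ((measurable_id.pow_const z).aestronglyMeasurable.smul hfi.aestronglyMeasurable)
    ((ae_restrict_mem measurableSet_Ioi).mono fun _ hx =>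
      norm_rpow_smul_le_of_one_le hz hx.le)

noncomputable def rpowIntegralRemainder (f : ℝ → E) (z : ℝ) : E :=
  (∫ x in Ioc 0 1, x ^ z • (f x - f 0)) + ∫ x in Ioi 1, x ^ z • f x

theorem integral_Ioi_rpow_smul_eq [CompleteSpace E] (hf : LipschitzOnWith K f (Icc 0 1))
    (hfi : IntegrableOn f (Ioi 1)) (hz : z ∈ Ioc (-1) 0) :
    ∫ x in Ioi 0, x ^ z • f x = (z + 1)⁻¹ • f 0 + rpowIntegralRemainder f z := by
  have hpow : IntegrableOn (fun x : ℝ => x ^ z) (Ioc 0 1) :=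
    (intervalIntegral.intervalIntegrable_rpow' hz.1).1
  have hmass : ∫ x in Ioc 0 1, x ^ z = (z + 1)⁻¹ := by
    rw [← intervalIntegral.integral_of_le zero_le_one, integral_rpow (Or.inl hz.1),
      Real.one_rpow, Real.zero_rpow (by linarith [hz.1]), sub_zero, one_div]
  have hsub := hf.integrableOn_Ioc_rpow_smul_sub hz.1.le
  have hIoc : ∫ x in Ioc 0 1, x ^ z • f x
      = (z + 1)⁻¹ • f 0 + ∫ x in Ioc 0 1, x ^ z • (f x - f 0) := by
    rw [← hmass, ← integral_smul_const, ← integral_add (hpow.smul_const _) hsub]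
    simp only [← smul_add, add_sub_cancel]
  rw [← Ioc_union_Ioi_eq_Ioi zero_le_one, setIntegral_union (Ioc_disjoint_Ioi le_rfl)
    measurableSet_Ioi ((hsub.add (hpow.smul_const (f 0))).congr_fun
      (fun x _ => by simp only [Pi.add_apply, ← smul_add, sub_add_cancel]) measurableSet_Ioc)
    (integrableOn_Ioi_one_rpow_smul hfi hz.2), hIoc, rpowIntegralRemainder, add_assoc]

theorem norm_rpowIntegralRemainder_le (hf : LipschitzOnWith K f (Icc 0 1))
    (hfi : IntegrableOn f (Ioi 1)) (hz : z ∈ Icc (-1) 0) :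
    ‖rpowIntegralRemainder f z‖ ≤ K + ∫ x in Ioi 1, ‖f x‖ := by
  refine (norm_add_le _ _).trans (add_le_add ?_ ?_)
  · simpa using norm_setIntegral_le_of_norm_le_const (μ := volume) measure_Ioc_lt_top
      fun x hx => hf.norm_rpow_smul_sub_le hz.1 hx
  · exact norm_integral_le_of_norm_le hfi.norm ((ae_restrict_mem measurableSet_Ioi).mono
      fun _ hx => norm_rpow_smul_le_of_one_le hz.2 hx.le)

theorem tendsto_one_div_Gamma_smul_integral_Ioi_rpow_smul [CompleteSpace E]
    (hf : LipschitzOnWith K f (Icc 0 1)) (hfi : IntegrableOn f (Ioi 1)) :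
    Tendsto (fun z : ℝ => (1 / Real.Gamma (z + 1)) • ∫ x in Ioi 0, x ^ z • f x)
      (𝓝[>] (-1)) (𝓝 (f 0)) := by
  have hz : ∀ᶠ z in 𝓝[>] (-1 : ℝ), z ∈ Ioc (-1) 0 := Ioc_mem_nhdsGT (by norm_num)
  have hsplit : ∀ᶠ z in 𝓝[>] (-1 : ℝ),
      (1 / Real.Gamma (z + 2)) • f 0 + (1 / Real.Gamma (z + 1)) • rpowIntegralRemainder f z
        = (1 / Real.Gamma (z + 1)) • ∫ x in Ioi 0, x ^ z • f x := by
    filter_upwards [hz] with z hz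
    have hz1 : z + 1 ≠ 0 := by linarith [hz.1]
    rw [integral_Ioi_rpow_smul_eq hf hfi hz, smul_add, smul_smul, show z + 2 = z + 1 + 1 by ring,
      Real.Gamma_add_one hz1]
    simp only [one_div, mul_inv_rev]
  have hmain : Tendsto (fun z : ℝ => (1 / Real.Gamma (z + 2)) • f 0) (𝓝[>] (-1)) (𝓝 (f 0)) :=
    tendsto_nhdsWithin_of_tendsto_nhds <|
      ((Real.continuous_one_div_Gamma.comp (continuous_add_const 2)).smul continuous_const).tendsto'
        _ _ (by norm_num [Real.Gamma_one])
  have hvanish : Tendsto (fun z : ℝ => 1 / Real.Gamma (z + 1)) (𝓝[>] (-1)) (𝓝 0) :=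
    tendsto_nhdsWithin_of_tendsto_nhds <|
      (Real.continuous_one_div_Gamma.comp (continuous_add_const 1)).tendsto' _ _
        (by norm_num [Real.Gamma_zero])
  have hbdd : IsBoundedUnder (· ≤ ·) (𝓝[>] (-1)) (norm ∘ rpowIntegralRemainder f) :=
    ⟨_, eventually_map.2 (hz.mono fun z hz =>
      norm_rpowIntegralRemainder_le hf hfi (Ioc_subset_Icc_self hz))⟩
  simpa using (hmain.add (hvanish.zero_smul_isBoundedUnder_le hbdd)).congr' hsplit

end RpowIntegral

/-- For a Schwartz function `φ` on `ℝ`, the limit as `z → -1` (along real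
`z ∈ (-1,0)`) of `(1/Γ(z+1)) ∫_0^∞ x^z φ(x) dx` is `φ(0)`; i.e. `x₊^z/Γ(z+1) → δ₀`. -/
theorem dirac_limit_xz_over_gamma (φ : SchwartzMap ℝ ℂ) :
    Tendsto
      (fun z : ℝ => (1 / Real.Gamma (z + 1)) • ∫ x in Set.Ioi (0 : ℝ), (x ^ z : ℝ) • φ x)
      (nhdsWithin (-1 : ℝ) (Set.Ioo (-1 : ℝ) 0))
      (nhds (φ 0)) :=
  (tendsto_one_div_Gamma_smul_integral_Ioi_rpow_smul φ.lipschitzWith.lipschitzOnWith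
    φ.integrable.integrableOn).mono_left (nhdsWithin_mono _ Ioo_subset_Ioi_self)
end
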